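/- arXiv:1402.2255 — 2 statements merged into one kernel-verified Lean document; each statement's English description precedes it below -/
import Mathlib

section
/- Let C = λ x₀ x₀* with λ > 0 and ‖x₀‖ = 1, and let Ĉ be any Hermitian matrix. If x̂ is a unit-norm maximizer of x ↦ x* Ĉ x over the unit sphere, then (λ/2) ‖x̂ x̂* − x₀ x₀*‖_F² ≤ 2 ‖Ĉ − C‖, where ‖·‖ is the operator norm. -/
/-!
For a unit vector `x`, the quadratic form of `C = λ x₀ x₀*` is `λ |x* x₀|²`, while
`‖x x* − x₀ x₀*‖_F² = 2 − 2 |x* x₀|²`; so the left-hand side is exactly the gap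
`x₀* C x₀ − x̂* C x̂`. Passing through `Ĉ`, this gap splits into two perturbation terms, each
at most `‖Ĉ − C‖`, and `x₀* Ĉ x₀ − x̂* Ĉ x̂`, which is nonpositive because `x̂` maximizes the
form of `Ĉ`.
-/

open Matrix

namespace Matrix

variable {𝕜 ι : Type*} [RCLike 𝕜] [Fintype ι]

theorem norm_star_dotProduct_self (x : ι → 𝕜) : ‖star x ⬝ᵥ x‖ = ∑ i, ‖x i‖ ^ 2 := by
  simp only [dotProduct, Pi.star_apply, RCLike.star_def, RCLike.conj_mul, ← RCLike.ofReal_pow,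
    ← RCLike.ofReal_sum, RCLike.norm_ofReal]
  exact abs_of_nonneg (by positivity)

theorem re_star_dotProduct_smul_vecMulVec_mulVec (r : ℝ) (u x : ι → 𝕜) :
    RCLike.re (star x ⬝ᵥ ((r : 𝕜) • vecMulVec u (star u)) *ᵥ x) = r * ‖star x ⬝ᵥ u‖ ^ 2 := by
  rw [smul_mulVec, vecMulVec_mulVec, dotProduct_smul, dotProduct_smul, star_dotProduct u x,
    op_smul_eq_mul, RCLike.star_def, RCLike.mul_conj, smul_eq_mul, ← RCLike.ofReal_pow,
    RCLike.re_ofReal_mul, RCLike.ofReal_re]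

theorem sum_norm_sq_vecMulVec_sub_vecMulVec (x y : ι → 𝕜) :
    ∑ i, ∑ j, ‖(vecMulVec x (star x) - vecMulVec y (star y)) i j‖ ^ 2
      = (∑ i, ‖x i‖ ^ 2) ^ 2 + (∑ i, ‖y i‖ ^ 2) ^ 2 - 2 * ‖star x ⬝ᵥ y‖ ^ 2 := by
  have cross : ∑ i, ∑ j, RCLike.re (inner 𝕜 (x i * star (x j)) (y i * star (y j)))
      = ‖star x ⬝ᵥ y‖ ^ 2 := by
    rw [← RCLike.ofReal_re (K := 𝕜) (‖_‖ ^ 2), RCLike.ofReal_pow, ← RCLike.mul_conj, dotProduct,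
      ← RCLike.star_def, star_sum, Finset.sum_mul_sum]
    simp only [map_sum, RCLike.inner_apply', Pi.star_apply, RCLike.star_def, map_mul,
      RCLike.conj_conj]
    congr! 2 with i - j -
    rw [mul_mul_mul_comm]
  simp only [sub_apply, vecMulVec_apply, Pi.star_apply, @norm_sub_sq 𝕜, Finset.sum_add_distrib,
    Finset.sum_sub_distrib, ← Finset.mul_sum, cross, norm_mul, norm_star, mul_pow, ← Finset.sum_mul]
  ring

variable [DecidableEq ι]

theorem norm_star_dotProduct_mulVec_le (A : Matrix ι ι 𝕜) (x : ι → 𝕜) :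
    ‖star x ⬝ᵥ A *ᵥ x‖ ≤ ‖toEuclideanCLM (𝕜 := 𝕜) A‖ * ∑ i, ‖x i‖ ^ 2 := by
  set y : EuclideanSpace 𝕜 ι := WithLp.toLp 2 x
  have hquad : star x ⬝ᵥ A *ᵥ x = inner 𝕜 y (toEuclideanCLM (𝕜 := 𝕜) A y) := by
    rw [toEuclideanCLM_toLp, EuclideanSpace.inner_toLp_toLp, dotProduct_comm]
  calc ‖star x ⬝ᵥ A *ᵥ x‖ ≤ ‖y‖ * ‖toEuclideanCLM (𝕜 := 𝕜) A y‖ :=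
        hquad ▸ norm_inner_le_norm _ _
    _ ≤ ‖y‖ * (‖toEuclideanCLM (𝕜 := 𝕜) A‖ * ‖y‖) := by
        gcongr; exact ContinuousLinearMap.le_opNorm _ _
    _ = ‖toEuclideanCLM (𝕜 := 𝕜) A‖ * ∑ i, ‖x i‖ ^ 2 := by
        rw [← EuclideanSpace.norm_sq_eq]; ring

theorem re_star_dotProduct_mulVec_sub_le (A B : Matrix ι ι 𝕜) {x : ι → 𝕜}
    (hx : ∑ i, ‖x i‖ ^ 2 = 1) :
    RCLike.re (star x ⬝ᵥ A *ᵥ x) - RCLike.re (star x ⬝ᵥ B *ᵥ x)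
      ≤ ‖toEuclideanCLM (𝕜 := 𝕜) (A - B)‖ := by
  have h := norm_star_dotProduct_mulVec_le (A - B) x
  rw [hx, mul_one, sub_mulVec, dotProduct_sub] at h
  exact (map_sub _ _ _).symm.le.trans ((RCLike.re_le_norm _).trans h)

theorem re_star_dotProduct_mulVec_sub_le_of_forall_le (A B : Matrix ι ι 𝕜) {x₀ xh : ι → 𝕜}
    (hx₀ : ∑ i, ‖x₀ i‖ ^ 2 = 1) (hxh : ∑ i, ‖xh i‖ ^ 2 = 1)
    (hmax : ∀ x : ι → 𝕜, ∑ i, ‖x i‖ ^ 2 = 1 →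
      RCLike.re (star x ⬝ᵥ B *ᵥ x) ≤ RCLike.re (star xh ⬝ᵥ B *ᵥ xh)) :
    RCLike.re (star x₀ ⬝ᵥ A *ᵥ x₀) - RCLike.re (star xh ⬝ᵥ A *ᵥ xh)
      ≤ 2 * ‖toEuclideanCLM (𝕜 := 𝕜) (B - A)‖ := by
  have h₀ := re_star_dotProduct_mulVec_sub_le A B hx₀
  have h₁ := re_star_dotProduct_mulVec_sub_le B A hxh
  rw [← norm_neg, ← map_neg, neg_sub] at h₀
  linarith [hmax x₀ hx₀]

end Matrix

theorem max_eigvec_frobenius_bound_general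
    (n : ℕ) (x₀ xh : Fin n → ℂ) (l : ℝ)
    (hx₀ : ∑ i, ‖x₀ i‖ ^ 2 = 1) (hxh : ∑ i, ‖xh i‖ ^ 2 = 1)
    (C Ch : Matrix (Fin n) (Fin n) ℂ)
    (hC : C = (l : ℂ) • Matrix.vecMulVec x₀ (star x₀))
    (hmax : ∀ x : Fin n → ℂ, (∑ i, ‖x i‖ ^ 2 = 1) →
      (star x ⬝ᵥ Ch.mulVec x).re ≤ (star xh ⬝ᵥ Ch.mulVec xh).re) :
    (l / 2) * ∑ i, ∑ j,
        ‖(Matrix.vecMulVec xh (star xh) - Matrix.vecMulVec x₀ (star x₀)) i j‖ ^ 2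
      ≤ 2 * ‖Matrix.toEuclideanCLM (𝕜 := ℂ) (Ch - C)‖ := by
  have hquad (x : Fin n → ℂ) : RCLike.re (star x ⬝ᵥ C *ᵥ x) = l * ‖star x ⬝ᵥ x₀‖ ^ 2 :=
    hC ▸ re_star_dotProduct_smul_vecMulVec_mulVec l x₀ x
  have hx₀x₀ : ‖star x₀ ⬝ᵥ x₀‖ = 1 := by rw [norm_star_dotProduct_self, hx₀]
  have hgap := re_star_dotProduct_mulVec_sub_le_of_forall_le C Ch hx₀ hxh hmax
  rw [hquad, hquad, hx₀x₀] at hgap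
  rw [sum_norm_sq_vecMulVec_sub_vecMulVec, hxh, hx₀]
  linear_combination hgap

/-- If `x̂` is a unit-norm maximizer of the quadratic form of a Hermitian matrix `Ĉ`
and `C = λ x₀ x₀*`, then `(λ/2) ‖x̂ x̂* − x₀ x₀*‖_F² ≤ 2 ‖Ĉ − C‖`. -/
theorem max_eigvec_frobenius_bound
    (n : ℕ) (x₀ xh : Fin n → ℂ) (l : ℝ) (hl : 0 < l)
    (hx₀ : ∑ i, ‖x₀ i‖ ^ 2 = 1) (hxh : ∑ i, ‖xh i‖ ^ 2 = 1)
    (C Ch : Matrix (Fin n) (Fin n) ℂ)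
    (hC : C = (l : ℂ) • Matrix.vecMulVec x₀ (star x₀))
    (hherm : Ch.IsHermitian)
    (hmax : ∀ x : Fin n → ℂ, (∑ i, ‖x i‖ ^ 2 = 1) →
      (star x ⬝ᵥ Ch.mulVec x).re ≤ (star xh ⬝ᵥ Ch.mulVec xh).re) :
    (l / 2) * ∑ i, ∑ j,
        ‖(Matrix.vecMulVec xh (star xh) - Matrix.vecMulVec x₀ (star x₀)) i j‖ ^ 2
      ≤ 2 * ‖Matrix.toEuclideanCLM (𝕜 := ℂ) (Ch - C)‖ :=
  max_eigvec_frobenius_bound_general n x₀ xh l hx₀ hxh C Ch hC hmax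
end

section
/- Let L ~ Laplace(0,1) and N ~ Laplace(0, 1/γ) be independent (γ > 0). Then E[ sign(L + N) · L ] = 1 − 1/(1+γ)². In particular, writing σ = 1/γ² this equals (1 + 2√σ)/(1 + √σ)², which is strictly positive. -/
/-!
Conditioning on `L = x`, the sign of `x + N` has mean `1 - 2 P(N < -x)`; the Laplace tail
`P(N > a) = e^{-γa}/2` (`a ≥ 0`) and symmetry turn this into
`E[sign(x + N)] x = |x| (1 - e^{-γ|x|})`. Against the Laplace(0,1) density,
`E|L| = 1` and `E[|L| e^{-γ|L|}] = 1/(1+γ)²`, which gives `1 - 1/(1+γ)²`.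
-/

open MeasureTheory ProbabilityTheory Real

noncomputable def sgn (t : ℝ) : ℝ := if 0 ≤ t then 1 else -1

open Set

@[fun_prop]
lemma measurable_sgn : Measurable sgn :=
  Measurable.ite measurableSet_Ici measurable_const measurable_const

lemma abs_sgn (t : ℝ) : |sgn t| = 1 := by
  unfold sgn; split_ifs <;> norm_num

lemma sgn_eq_one_sub_indicator (t : ℝ) : sgn t = 1 - 2 * (Iio 0).indicator 1 t := by
  by_cases ht : 0 ≤ t
  · simp [sgn, ht]
  · norm_num [sgn, ht, not_le.mp ht]

lemma integral_sgn_add {ν : Measure ℝ} [IsProbabilityMeasure ν] (x : ℝ) :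
    ∫ y, sgn (x + y) ∂ν = 1 - 2 * ν.real (Iio (-x)) := by
  have hsgn (y : ℝ) : sgn (x + y) = 1 - 2 * (Iio (-x)).indicator 1 y := by
    simp [sgn_eq_one_sub_indicator, indicator_apply, lt_neg_iff_add_neg']
  simp_rw [hsgn]
  rw [integral_sub (integrable_const 1)
      ((integrable_const 1).indicator measurableSet_Iio |>.const_mul 2),
    integral_const_mul, integral_indicator_one measurableSet_Iio]
  simp

lemma integrable_sgn_add_mul_fst {μ ν : Measure ℝ} [IsFiniteMeasure ν]
    (hμ : Integrable (fun x => |x|) μ) :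
    Integrable (fun p : ℝ × ℝ => sgn (p.1 + p.2) * p.1) (μ.prod ν) := by
  refine (hμ.comp_fst ν).mono' (by fun_prop) (ae_of_all _ fun p => ?_)
  rw [Real.norm_eq_abs, abs_mul, abs_sgn, one_mul]

theorem ProbabilityTheory.IndepFun.integral_comp_eq_integral_integral {Ω α β E : Type*}
    [MeasurableSpace Ω] [MeasurableSpace α] [MeasurableSpace β]
    [NormedAddCommGroup E] [NormedSpace ℝ E]
    {P : Measure Ω} [IsFiniteMeasure P] {X : Ω → α} {Y : Ω → β} (hX : AEMeasurable X P)
    (hY : AEMeasurable Y P) (hXY : IndepFun X Y P) {f : α × β → E}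
    (hf : Integrable f ((P.map X).prod (P.map Y))) :
    ∫ ω, f (X ω, Y ω) ∂P = ∫ x, ∫ y, f (x, y) ∂P.map Y ∂P.map X := by
  have hpair := (indepFun_iff_map_prod_eq_prod_map_map hX hY).mp hXY
  rw [← integral_prod f hf, ← hpair,
    integral_map (hX.prodMk hY) (hpair ▸ hf.aestronglyMeasurable)]

lemma integral_mul_exp_neg_mul_Ioi {c : ℝ} (hc : 0 < c) :
    ∫ t in Ioi 0, t * exp (-c * t) = 1 / c ^ 2 := by
  have h := integral_rpow_mul_exp_neg_mul_Ioi (a := 2) two_pos hc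
  norm_num at h
  simpa [neg_mul] using h

lemma integral_abs_mul_exp_neg_mul_abs {c : ℝ} (hc : 0 < c) :
    ∫ x, |x| * exp (-c * |x|) = 2 / c ^ 2 := by
  rw [integral_comp_abs (f := fun t => t * exp (-c * t)), integral_mul_exp_neg_mul_Ioi hc]
  ring

lemma integrable_abs_mul_exp_neg_mul_abs {c : ℝ} (hc : 0 < c) :
    Integrable fun x => |x| * exp (-c * |x|) :=
  .of_integral_ne_zero (by rw [integral_abs_mul_exp_neg_mul_abs hc]; positivity)

/-- Density of Laplace(0, 1/γ), parametrized by the rate `γ` as the noise `N` is. -/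
noncomputable def laplacePDF (γ t : ℝ) : ℝ := γ / 2 * exp (-γ * |t|)

noncomputable def laplaceMeasure (γ : ℝ) : Measure ℝ :=
  volume.withDensity fun t => ENNReal.ofReal (laplacePDF γ t)

section Laplace

variable {γ : ℝ}

lemma measurable_laplacePDF (γ : ℝ) : Measurable (laplacePDF γ) := by
  unfold laplacePDF; fun_prop

lemma laplacePDF_nonneg (hγ : 0 ≤ γ) (t : ℝ) : 0 ≤ laplacePDF γ t := by
  unfold laplacePDF; positivity

lemma laplacePDF_neg (γ t : ℝ) : laplacePDF γ (-t) = laplacePDF γ t := by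
  simp [laplacePDF]

lemma setIntegral_laplacePDF_Iic (hγ : 0 < γ) {a : ℝ} (ha : a ≤ 0) :
    ∫ t in Iic a, laplacePDF γ t = exp (γ * a) / 2 := by
  rw [setIntegral_congr_fun measurableSet_Iic (g := fun t => γ / 2 * exp (γ * t))
    fun t (ht : t ≤ a) => by simp [laplacePDF, abs_of_nonpos (ht.trans ha)],
    integral_const_mul, integral_exp_mul_Iic hγ]
  field_simp

lemma setIntegral_laplacePDF_Ioi (hγ : 0 < γ) {a : ℝ} (ha : 0 ≤ a) :
    ∫ t in Ioi a, laplacePDF γ t = exp (-γ * a) / 2 := by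
  calc ∫ t in Ioi a, laplacePDF γ t = ∫ t in Ioi a, laplacePDF γ (-t) := by
        simp_rw [laplacePDF_neg]
    _ = exp (-γ * a) / 2 := by
        rw [integral_comp_neg_Ioi, setIntegral_laplacePDF_Iic hγ (neg_nonpos.mpr ha), mul_neg,
          neg_mul]

lemma integral_laplacePDF (hγ : 0 < γ) : ∫ t, laplacePDF γ t = 1 := by
  have hIic := setIntegral_laplacePDF_Iic hγ le_rfl
  have hIoi := setIntegral_laplacePDF_Ioi hγ le_rfl
  rw [← intervalIntegral.integral_Iic_add_Ioi (b := 0)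
    (.of_integral_ne_zero (by rw [hIic]; positivity))
    (.of_integral_ne_zero (by rw [hIoi]; positivity)), hIic, hIoi]
  norm_num

lemma integral_laplaceMeasure (hγ : 0 ≤ γ) (g : ℝ → ℝ) :
    ∫ t, g t ∂laplaceMeasure γ = ∫ t, laplacePDF γ t * g t := by
  rw [laplaceMeasure, integral_withDensity_eq_integral_toReal_smul
    (measurable_laplacePDF γ).ennreal_ofReal (ae_of_all _ fun _ => ENNReal.ofReal_lt_top)]
  simp_rw [ENNReal.toReal_ofReal (laplacePDF_nonneg hγ _), smul_eq_mul]

lemma laplaceMeasure_real_eq_setIntegral (hγ : 0 ≤ γ) {s : Set ℝ} (hs : MeasurableSet s) :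
    (laplaceMeasure γ).real s = ∫ t in s, laplacePDF γ t := by
  rw [← integral_indicator_one hs, integral_laplaceMeasure hγ, ← integral_indicator hs]
  congr 1 with t
  by_cases ht : t ∈ s <;> simp [ht]

lemma isProbabilityMeasure_laplaceMeasure (hγ : 0 < γ) :
    IsProbabilityMeasure (laplaceMeasure γ) := by
  have hint : Integrable (laplacePDF γ) :=
    .of_integral_ne_zero (by rw [integral_laplacePDF hγ]; exact one_ne_zero)
  constructor
  rw [laplaceMeasure, withDensity_apply _ MeasurableSet.univ, Measure.restrict_univ,
    ← ofReal_integral_eq_lintegral_ofReal hint (ae_of_all _ (laplacePDF_nonneg hγ.le)),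
    integral_laplacePDF hγ, ENNReal.ofReal_one]

lemma laplaceMeasure_real_Iio_of_nonpos (hγ : 0 < γ) {a : ℝ} (ha : a ≤ 0) :
    (laplaceMeasure γ).real (Iio a) = exp (γ * a) / 2 := by
  rw [laplaceMeasure_real_eq_setIntegral hγ.le measurableSet_Iio,
    setIntegral_congr_set Iio_ae_eq_Iic, setIntegral_laplacePDF_Iic hγ ha]

lemma laplaceMeasure_real_Iio_of_nonneg (hγ : 0 < γ) {a : ℝ} (ha : 0 ≤ a) :
    (laplaceMeasure γ).real (Iio a) = 1 - exp (-γ * a) / 2 := by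
  have := isProbabilityMeasure_laplaceMeasure hγ
  rw [← compl_Ici, measureReal_compl measurableSet_Ici, probReal_univ,
    laplaceMeasure_real_eq_setIntegral hγ.le measurableSet_Ici, integral_Ici_eq_integral_Ioi,
    setIntegral_laplacePDF_Ioi hγ ha]

lemma integral_sgn_add_laplaceMeasure_mul (hγ : 0 < γ) (x : ℝ) :
    (∫ y, sgn (x + y) ∂laplaceMeasure γ) * x = |x| * (1 - exp (-γ * |x|)) := by
  have := isProbabilityMeasure_laplaceMeasure hγ
  rw [integral_sgn_add]
  rcases le_or_gt 0 x with hx | hx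
  · rw [laplaceMeasure_real_Iio_of_nonpos hγ (neg_nonpos.mpr hx), abs_of_nonneg hx]
    ring_nf
  · rw [laplaceMeasure_real_Iio_of_nonneg hγ (neg_nonneg.mpr hx.le), abs_of_neg hx]
    ring_nf

lemma integral_abs_laplaceMeasure (hγ : 0 < γ) : ∫ x, |x| ∂laplaceMeasure γ = 1 / γ := by
  have h (t : ℝ) : laplacePDF γ t * |t| = γ / 2 * (|t| * exp (-γ * |t|)) := by
    rw [laplacePDF]; ring
  simp_rw [integral_laplaceMeasure hγ.le, h, integral_const_mul,
    integral_abs_mul_exp_neg_mul_abs hγ]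
  field_simp

lemma integrable_abs_laplaceMeasure (hγ : 0 < γ) :
    Integrable (fun x => |x|) (laplaceMeasure γ) :=
  .of_integral_ne_zero (by rw [integral_abs_laplaceMeasure hγ]; positivity)

lemma integral_abs_mul_one_sub_exp_laplaceMeasure_one (hγ : 0 < γ) :
    ∫ x, |x| * (1 - exp (-γ * |x|)) ∂laplaceMeasure 1 = 1 - 1 / (1 + γ) ^ 2 := by
  have h1γ : 0 < 1 + γ := by linarith
  have h (x : ℝ) : laplacePDF 1 x * (|x| * (1 - exp (-γ * |x|)))
      = 1 / 2 * (|x| * exp (-1 * |x|)) - 1 / 2 * (|x| * exp (-(1 + γ) * |x|)) := by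
    have hexp : exp (-(1 + γ) * |x|) = exp (-1 * |x|) * exp (-γ * |x|) := by
      rw [← exp_add]; ring_nf
    rw [laplacePDF, hexp]; ring
  simp_rw [integral_laplaceMeasure zero_le_one, h]
  rw [integral_sub ((integrable_abs_mul_exp_neg_mul_abs one_pos).const_mul _)
      ((integrable_abs_mul_exp_neg_mul_abs h1γ).const_mul _), integral_const_mul,
    integral_const_mul, integral_abs_mul_exp_neg_mul_abs one_pos,
    integral_abs_mul_exp_neg_mul_abs h1γ]
  field_simp

end Laplace

/-- For independent `L ~ Laplace(0,1)` and `N ~ Laplace(0,1/γ)` (`γ > 0`),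
`E[sign(L+N)·L] = 1 − 1/(1+γ)² = (1+2√σ)/(1+√σ)² > 0` where `σ = 1/γ²`. -/
theorem sign_laplace_noise_coefficient
    {Ω : Type*} [MeasurableSpace Ω] (P : Measure Ω) [IsProbabilityMeasure P]
    (γ : ℝ) (hγ : 0 < γ) (L N : Ω → ℝ) (hmL : Measurable L) (hmN : Measurable N)
    (hL : Measure.map L P
      = volume.withDensity (fun t => ENNReal.ofReal ((1 / 2) * Real.exp (-|t|))))
    (hN : Measure.map N P
      = volume.withDensity (fun t => ENNReal.ofReal ((γ / 2) * Real.exp (-γ * |t|))))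
    (hind : IndepFun L N P) (σ : ℝ) (hσ : σ = 1 / γ ^ 2) :
    (∫ ω, sgn (L ω + N ω) * L ω ∂P) = 1 - 1 / (1 + γ) ^ 2
      ∧ 1 - 1 / (1 + γ) ^ 2 = (1 + 2 * Real.sqrt σ) / (1 + Real.sqrt σ) ^ 2
      ∧ 0 < 1 - 1 / (1 + γ) ^ 2 := by
  have hL' : P.map L = laplaceMeasure 1 := by simp [hL, laplaceMeasure, laplacePDF]
  have hN' : P.map N = laplaceMeasure γ := hN
  have := isProbabilityMeasure_laplaceMeasure hγ
  have hint := integrable_sgn_add_mul_fst (ν := laplaceMeasure γ)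
    (integrable_abs_laplaceMeasure one_pos)
  refine ⟨?_, ?_, ?_⟩
  · calc ∫ ω, sgn (L ω + N ω) * L ω ∂P
        = ∫ x, ∫ y, sgn (x + y) * x ∂P.map N ∂P.map L :=
          hind.integral_comp_eq_integral_integral hmL.aemeasurable hmN.aemeasurable
            (f := fun p => sgn (p.1 + p.2) * p.1) (by rwa [hL', hN'])
      _ = ∫ x, |x| * (1 - exp (-γ * |x|)) ∂laplaceMeasure 1 := by
          simp_rw [hN', hL', integral_mul_const, integral_sgn_add_laplaceMeasure_mul hγ]
      _ = 1 - 1 / (1 + γ) ^ 2 := integral_abs_mul_one_sub_exp_laplaceMeasure_one hγ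
  · rw [hσ, show 1 / γ ^ 2 = (1 / γ) ^ 2 by ring, sqrt_sq (by positivity)]
    field_simp
    ring
  · rw [sub_pos, div_lt_one (by positivity)]
    nlinarith
end
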